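/- Let G be a d-regular bipartite graph and f : [0,1]² → [0,1] a symmetric measurable function (graphon). Then t(G, f) ≤ t(K_{d,d}, f)^{|V(G)|/(2d)}. -/

import Mathlib

open MeasureTheory unitInterval

/-- The homomorphism density `t(H, f)` of a finite simple graph `H` in a kernel
`f : [0,1]² → ℝ`. -/
noncomputable def homDensity {m : ℕ} (H : SimpleGraph (Fin m)) [DecidableRel H.Adj]
    (f : I → I → ℝ) : ℝ :=
  ∫ x : Fin m → I,
    ∏ e ∈ Finset.univ.filter (fun e : Fin m × Fin m => e.1 < e.2 ∧ H.Adj e.1 e.2),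
      f (x e.1) (x e.2)

/-- The complete bipartite graph `K_{d,d}` on the vertex set `Fin (2*d)`,
with parts `{0,…,d-1}` and `{d,…,2d-1}`. -/
def Kdd (d : ℕ) : SimpleGraph (Fin (2 * d)) where
  Adj i j := Xor (i.val < d) (j.val < d)
  symm := ⟨fun i j h => h.symm⟩
  loopless := ⟨fun i h => h.elim (fun ⟨h1, h2⟩ => h2 h1) (fun ⟨h1, h2⟩ => h2 h1)⟩

instance (d : ℕ) : DecidableRel (Kdd d).Adj := fun i j =>
  inferInstanceAs (Decidable (Xor _ _))

/-!
Split the vertices along a bipartition `A ⊔ B`. Integrating out the `B`-coordinates first, the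
edge product factorizes: each `b ∈ B` contributes `g_b(x) = ∫ ∏_{a ∼ b} f(x_a, t) dt`, which only
depends on the `d` coordinates in `N(b) ⊆ A`. Every `a ∈ A` lies in exactly `d` of the sets `N(b)`,
so Finner's inequality bounds `∫ ∏_b g_b` by `∏_b ‖g_b‖_d`, and `‖g_b‖_d^d = t(K_{d,d}, f)` by the
same factorization applied to `K_{d,d}`. Regularity forces `|A| = |B| = |V(G)| / 2`.
-/

open Finset Function
open scoped ENNReal

theorem lintegral_prod_le_prod_lintegral_rpow {α ι : Type*} [MeasurableSpace α] {μ : Measure α}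
    [IsProbabilityMeasure μ] (s : Finset ι) {f : ι → α → ℝ≥0∞}
    (hf : ∀ i ∈ s, AEMeasurable (f i) μ) {p : ℝ} (hp : 0 < p) (hs : #s ≤ p) :
    ∫⁻ a, ∏ i ∈ s, f i a ∂μ ≤ ∏ i ∈ s, (∫⁻ a, f i a ^ p ∂μ) ^ p⁻¹ := by
  have holder := ENNReal.lintegral_mul_prod_norm_pow_le s (μ := μ) (g := 1)
    (f := fun i a => f i a ^ p) aemeasurable_const (fun i hi => (hf i hi).pow_const p)
    (1 - #s / p) (p := fun _ => p⁻¹) (by rw [sum_const, nsmul_eq_mul]; field_simp; ring)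
    (by rw [sub_nonneg, div_le_one hp]; exact hs) (fun _ _ => by positivity)
  simpa [ENNReal.rpow_rpow_inv hp.ne'] using holder

theorem DependsOn.update_of_notMem {δ β : Type*} [DecidableEq δ] {X : δ → Type*}
    {f : (∀ i, X i) → β} {s : Set δ} (hf : DependsOn f s) {i : δ} (hi : i ∉ s) (x : ∀ i, X i)
    (y : X i) : f (Function.update x i y) = f x :=
  hf fun _ hj => update_of_ne (ne_of_mem_of_not_mem hj hi) y x

section Marginal

variable {δ : Type*} [DecidableEq δ] {X : δ → Type*} [∀ i, MeasurableSpace (X i)]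
  {μ : ∀ i, Measure (X i)}

theorem DependsOn.lintegral_update {f : (∀ i, X i) → ℝ≥0∞} {s : Set δ} (hf : DependsOn f s)
    (i : δ) : DependsOn (fun x => ∫⁻ t, f (Function.update x i t) ∂μ i) s := fun x y hxy =>
  lintegral_congr fun t => hf fun j hj => by
    rcases eq_or_ne j i with rfl | hji
    · simp
    · simp [hji, hxy j hj]

theorem lintegral_prod_update_eq_mul {ι : Type*} (B : Finset ι) {S : ι → Finset δ}
    {g : ι → (∀ i, X i) → ℝ≥0∞} (hg : ∀ b ∈ B, Measurable (g b))
    (hdep : ∀ b ∈ B, DependsOn (g b) (S b)) (i : δ) (x : ∀ i, X i) :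
    ∫⁻ t, ∏ b ∈ B, g b (update x i t) ∂μ i =
      (∫⁻ t, ∏ b ∈ B with i ∈ S b, g b (update x i t) ∂μ i) * ∏ b ∈ B with i ∉ S b, g b x := by
  have hconst (t : X i) :
      ∏ b ∈ B with i ∉ S b, g b (update x i t) = ∏ b ∈ B with i ∉ S b, g b x :=
    prod_congr rfl fun b hb => by
      rw [mem_filter] at hb
      exact (hdep b hb.1).update_of_notMem (by simpa using hb.2) x t
  simp_rw [← prod_filter_mul_prod_filter_not B (fun b => i ∈ S b), hconst]
  refine lintegral_mul_const _ (Finset.measurable_prod _ fun b hb => ?_)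
  exact (hg b (mem_filter.mp hb).1).comp (measurable_update x)

variable [∀ i, IsProbabilityMeasure (μ i)]

theorem lmarginal_eq_self_of_dependsOn {f : (∀ i, X i) → ℝ≥0∞} {s : Set δ} {t : Finset δ}
    (hf : DependsOn f s) (hst : Disjoint s t) : ∫⋯∫⁻_t, f ∂μ = f := by
  ext x
  have hupd (y : ∀ i : t, X i) : f (updateFinset x t y) = f x :=
    hf fun i hi => by
      have hit : i ∉ t := Set.disjoint_left.mp hst hi
      simp [updateFinset, hit]
  simp [lmarginal, hupd]

theorem lmarginal_eq_lmarginal_inter {f : (∀ i, X i) → ℝ≥0∞} (hf : Measurable f) {s : Finset δ}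
    (hfs : DependsOn f s) (t : Finset δ) : ∫⋯∫⁻_t, f ∂μ = ∫⋯∫⁻_(t ∩ s), f ∂μ := by
  conv_lhs => rw [← sdiff_union_inter t s, lmarginal_union' μ f hf (disjoint_sdiff_inter t s),
    lmarginal_eq_self_of_dependsOn hfs (by simpa using disjoint_sdiff_self_left.symm)]

theorem lintegral_update_of_notMem {f : (∀ i, X i) → ℝ≥0∞} {s : Set δ} (hf : DependsOn f s)
    {i : δ} (hi : i ∉ s) (x : ∀ i, X i) : ∫⁻ t, f (update x i t) ∂μ i = f x := by
  simp [hf.update_of_notMem hi]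

variable {ι : Type*} (B : Finset ι) (S : ι → Finset δ)

theorem lintegral_prod_update_le {g : ι → (∀ i, X i) → ℝ≥0∞} (hg : ∀ b ∈ B, Measurable (g b))
    (hdep : ∀ b ∈ B, DependsOn (g b) (S b)) {p : ℝ} (hp : 0 < p) {i : δ}
    (hcount : #{b ∈ B | i ∈ S b} ≤ p) (x : ∀ i, X i) :
    ∫⁻ t, ∏ b ∈ B, g b (update x i t) ∂μ i ≤
      ∏ b ∈ B, (∫⁻ t, g b (update x i t) ^ p ∂μ i) ^ p⁻¹ := by
  have hconst : ∀ b ∈ ({b ∈ B | i ∉ S b} : Finset ι),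
      (∫⁻ t, g b (update x i t) ^ p ∂μ i) ^ p⁻¹ = g b x := fun b hb => by
      rw [mem_filter] at hb
      rw [lintegral_update_of_notMem (fun y z hyz => congrArg (· ^ p) (hdep b hb.1 hyz))
        (by simpa using hb.2), ENNReal.rpow_rpow_inv hp.ne']
  rw [lintegral_prod_update_eq_mul B hg hdep,
    ← prod_filter_mul_prod_filter_not B (fun b => i ∈ S b), prod_congr rfl hconst]
  gcongr
  exact lintegral_prod_le_prod_lintegral_rpow _
    (fun b hb => ((hg b (mem_filter.mp hb).1).comp (measurable_update x)).aemeasurable) hp hcount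

theorem lintegral_prod_update_eq_prod {g : ι → (∀ i, X i) → ℝ≥0∞}
    (hg : ∀ b ∈ B, Measurable (g b)) (hdep : ∀ b ∈ B, DependsOn (g b) (S b)) {i : δ}
    (hcount : #{b ∈ B | i ∈ S b} ≤ 1) (x : ∀ i, X i) :
    ∫⁻ t, ∏ b ∈ B, g b (update x i t) ∂μ i = ∏ b ∈ B, ∫⁻ t, g b (update x i t) ∂μ i := by
  have hconst : ∀ b ∈ ({b ∈ B | i ∉ S b} : Finset ι),
      ∫⁻ t, g b (update x i t) ∂μ i = g b x := fun b hb => by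
      rw [mem_filter] at hb
      exact lintegral_update_of_notMem (hdep b hb.1) (by simpa using hb.2) x
  rw [lintegral_prod_update_eq_mul B hg hdep,
    ← prod_filter_mul_prod_filter_not B (fun b => i ∈ S b), prod_congr rfl hconst]
  congr 1
  obtain hempty | hsingle := Nat.le_one_iff_eq_zero_or_eq_one.mp hcount
  · simp [card_eq_zero.mp hempty]
  · obtain ⟨b, hb⟩ := card_eq_one.mp hsingle
    simp [hb]

/-- Finner's inequality. -/
theorem lmarginal_prod_le_prod_lmarginal_rpow {p : ℝ} (hp : 0 < p) (T : Finset δ)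
    (hcount : ∀ i ∈ T, #{b ∈ B | i ∈ S b} ≤ p) {g : ι → (∀ i, X i) → ℝ≥0∞}
    (hg : ∀ b ∈ B, Measurable (g b)) (hdep : ∀ b ∈ B, DependsOn (g b) (S b)) (x : ∀ i, X i) :
    (∫⋯∫⁻_T, (fun x => ∏ b ∈ B, g b x) ∂μ) x ≤
      ∏ b ∈ B, (∫⋯∫⁻_T, (fun x => g b x ^ p) ∂μ) x ^ p⁻¹ := by
  induction T using Finset.induction generalizing g x with
  | empty => simp [ENNReal.rpow_rpow_inv hp.ne']
  | insert i T hi ih =>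
    set h : ι → (∀ i, X i) → ℝ≥0∞ := fun b x => (∫⁻ t, g b (update x i t) ^ p ∂μ i) ^ p⁻¹
    have hh_meas (b : ι) (hb : b ∈ B) : Measurable (h b) := by
      have := ((hg b hb).pow_const p).lmarginal μ (s := {i})
      rw [lmarginal_singleton] at this
      exact this.pow_const _
    have hh_dep (b : ι) (hb : b ∈ B) : DependsOn (h b) (S b) := fun y z hyz =>
      congrArg (· ^ p⁻¹)
        (DependsOn.lintegral_update (fun _ _ hxy => congrArg (· ^ p) (hdep b hb hxy)) i hyz)
    calc (∫⋯∫⁻_insert i T, (fun x => ∏ b ∈ B, g b x) ∂μ) x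
        = (∫⋯∫⁻_T, (fun x => ∫⁻ t, ∏ b ∈ B, g b (update x i t) ∂μ i) ∂μ) x := by
          rw [lmarginal_insert' _ (Finset.measurable_prod _ hg) hi]
      _ ≤ (∫⋯∫⁻_T, (fun x => ∏ b ∈ B, h b x) ∂μ) x :=
          lmarginal_mono (fun y =>
            lintegral_prod_update_le B S hg hdep hp (hcount i (mem_insert_self i T)) y) x
      _ ≤ ∏ b ∈ B, (∫⋯∫⁻_T, (fun x => h b x ^ p) ∂μ) x ^ p⁻¹ :=
          ih (fun j hj => hcount j (mem_insert_of_mem hj)) hh_meas hh_dep x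
      _ = ∏ b ∈ B, (∫⋯∫⁻_insert i T, (fun x => g b x ^ p) ∂μ) x ^ p⁻¹ := by
          refine prod_congr rfl fun b hb => ?_
          rw [lmarginal_insert' _ ((hg b hb).pow_const p) hi]
          simp only [h, ENNReal.rpow_inv_rpow hp.ne']

theorem lmarginal_prod_eq_prod_lmarginal (T : Finset δ)
    (hcount : ∀ i ∈ T, #{b ∈ B | i ∈ S b} ≤ 1) {g : ι → (∀ i, X i) → ℝ≥0∞}
    (hg : ∀ b ∈ B, Measurable (g b)) (hdep : ∀ b ∈ B, DependsOn (g b) (S b)) :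
    ∫⋯∫⁻_T, (fun x => ∏ b ∈ B, g b x) ∂μ = fun x => ∏ b ∈ B, (∫⋯∫⁻_T, g b ∂μ) x := by
  induction T using Finset.induction generalizing g with
  | empty => simp
  | insert i T hi ih =>
    have hmeas (b : ι) (hb : b ∈ B) : Measurable fun x => ∫⁻ t, g b (update x i t) ∂μ i := by
      simpa only [lmarginal_singleton] using (hg b hb).lmarginal μ (s := {i})
    rw [lmarginal_insert' _ (Finset.measurable_prod _ hg) hi]
    simp_rw [lintegral_prod_update_eq_prod B S hg hdep (hcount i (mem_insert_self i T))]
    rw [ih (fun j hj => hcount j (mem_insert_of_mem hj)) hmeas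
      (fun b hb => (hdep b hb).lintegral_update i)]
    ext x
    refine prod_congr rfl fun b hb => ?_
    rw [lmarginal_insert' _ (hg b hb) hi]

end Marginal

section Reindex

variable {δ : Type*} [DecidableEq δ] {α : Type*} [MeasurableSpace α] {μ : Measure α}
  [SigmaFinite μ] {F : α → α → ℝ≥0∞}

theorem lmarginal_comp_equiv {ι : Type*} [Fintype ι] {s : Finset δ} (e : ι ≃ s)
    (Φ : (ι → α) → ℝ≥0∞) (x : δ → α) :
    (∫⋯∫⁻_s, (fun x => Φ (fun i => x (e i))) ∂fun _ => μ) x =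
      ∫⁻ y, Φ y ∂Measure.pi fun _ => μ := by
  rw [lmarginal, (measurePreserving_piCongrLeft (fun _ => μ) e).lintegral_map_equiv]
  congr! with y
  simp only [updateFinset, coe_mem, dite_true, Subtype.coe_eta]
  exact Equiv.piCongrLeft_apply_apply _ _ _ _

theorem lmarginal_pow_lintegral_prod_eq {s : Finset δ} {d : ℕ} (hs : #s = d) (x : δ → α) :
    (∫⋯∫⁻_s, (fun x => (∫⁻ t, ∏ a ∈ s, F (x a) t ∂μ) ^ d) ∂fun _ => μ) x =
      ∫⁻ z : Fin d → α, (∫⁻ t, ∏ i, F (z i) t ∂μ) ^ d ∂Measure.pi fun _ => μ := by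
  let e : Fin d ≃ s := (s.equivFin.trans (finCongr hs)).symm
  rw [← lmarginal_comp_equiv e _ x]
  congr! with y t
  rw [← prod_coe_sort s, ← e.prod_comp]

end Reindex

namespace SimpleGraph

variable {V : Type*} {G : SimpleGraph V}

theorem IsBipartiteWith.mem_iff_notMem_of_adj {s t : Set V} (h : G.IsBipartiteWith s t)
    {u v : V} (huv : G.Adj u v) : u ∈ t ↔ v ∉ t := by
  have hdisj := Set.disjoint_left.mp h.disjoint
  rcases h.mem_of_adj huv with ⟨hu, hv⟩ | ⟨hu, hv⟩
  · simp [hv, hdisj hu]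
  · simp [hu, hdisj hv]

theorem IsBipartiteWith.compl_left {s t : Set V} (h : G.IsBipartiteWith s t) :
    G.IsBipartiteWith tᶜ t where
  disjoint := disjoint_compl_left
  mem_of_adj u v huv := by
    by_cases hv : v ∈ t
    · exact .inl ⟨(h.mem_iff_notMem_of_adj huv).not.mpr (not_not.mpr hv), hv⟩
    · exact .inr ⟨(h.mem_iff_notMem_of_adj huv).mpr hv, hv⟩

variable [Fintype V] [DecidableRel G.Adj]

theorem prod_adj_lt_eq_prod_prod_neighborFinset [LinearOrder V] {M : Type*} [CommMonoid M]
    {s : Set V} {B : Finset V} (hB : G.IsBipartiteWith s B) (w : V → V → M)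
    (hw : ∀ a b, w a b = w b a) :
    ∏ e ∈ univ.filter (fun e : V × V => e.1 < e.2 ∧ G.Adj e.1 e.2), w e.1 e.2 =
      ∏ b ∈ B, ∏ a ∈ G.neighborFinset b, w a b := by
  rw [← prod_finset_product_right' (univ.filter fun p : V × V => p.2 ∈ B ∧ G.Adj p.1 p.2) B _
    (by simp [G.adj_comm])]
  have hB' : ∀ ⦃u v⦄, G.Adj u v → (u ∈ B ↔ v ∉ B) := fun _ _ huv => by
    simpa using hB.mem_iff_notMem_of_adj huv
  -- orient each edge towards its endpoint in `B`
  refine prod_nbij' (fun e => if e.2 ∈ B then e else e.swap)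
    (fun p => if p.1 < p.2 then p else p.swap) ?_ ?_ ?_ ?_ ?_
  all_goals intro e he
  all_goals simp only [mem_filter, mem_univ, true_and] at he ⊢
  all_goals grind [G.adj_comm, G.ne_of_adj]

theorem IsRegularOfDegree.card_eq_two_mul_card [DecidableEq V] {d : ℕ}
    (hreg : G.IsRegularOfDegree d) (hd : 0 < d) {B : Finset V}
    (hB : G.IsBipartiteWith ↑Bᶜ ↑B) : Fintype.card V = 2 * #B := by
  have hsum := isBipartiteWith_sum_degrees_eq hB
  simp only [hreg.degree_eq, sum_const, smul_eq_mul] at hsum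
  have hcard := Nat.eq_of_mul_eq_mul_right hd hsum
  rw [card_compl] at hcard
  have := card_le_univ B
  omega

section Density

variable [DecidableEq V] {α : Type*} [MeasurableSpace α] {μ : Measure α} [IsProbabilityMeasure μ]
  {F : α → α → ℝ≥0∞}

theorem lintegral_prod_prod_neighborFinset_eq_lmarginal {B : Finset V}
    (hB : G.IsBipartiteWith ↑Bᶜ ↑B) (hF : Measurable (uncurry F)) (x₀ : V → α) :
    ∫⁻ x, ∏ b ∈ B, ∏ a ∈ G.neighborFinset b, F (x a) (x b) ∂Measure.pi (fun _ => μ) =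
      (∫⋯∫⁻_Bᶜ, (fun x => ∏ b ∈ B, ∫⁻ t, ∏ a ∈ G.neighborFinset b, F (x a) t ∂μ)
        ∂fun _ => μ) x₀ := by
  have hnbr (b : V) (hb : b ∈ B) : G.neighborFinset b ⊆ Bᶜ :=
    isBipartiteWith_neighborFinset_subset' hB hb
  have hmeas (b : V) (_ : b ∈ B) :
      Measurable fun x : V → α => ∏ a ∈ G.neighborFinset b, F (x a) (x b) := by
    fun_prop
  have hdep (b : V) (_ : b ∈ B) :
      DependsOn (fun x : V → α => ∏ a ∈ G.neighborFinset b, F (x a) (x b))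
        ↑(insert b (G.neighborFinset b)) := fun x y hxy =>
    prod_congr rfl fun a ha => by
      rw [hxy a (mem_coe.mpr (mem_insert_of_mem ha)), hxy b (mem_coe.mpr (mem_insert_self b _))]
  have hcount (i : V) (hi : i ∈ B) : #{b ∈ B | i ∈ insert b (G.neighborFinset b)} ≤ 1 := by
    refine (card_le_card fun b hb => ?_).trans (card_singleton i).le
    simp only [mem_filter, mem_insert] at hb
    rcases hb with ⟨hb, rfl | hib⟩
    · exact mem_singleton_self _
    · exact absurd hi (mem_compl.mp (hnbr b hb hib))
  rw [lintegral_eq_lmarginal_univ x₀, ← union_compl B,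
    lmarginal_union' _ _ (Finset.measurable_prod _ hmeas) disjoint_compl_right,
    lmarginal_prod_eq_prod_lmarginal B _ B hcount hmeas hdep]
  congr 1
  ext x
  refine prod_congr rfl fun b hb => ?_
  have hBb : B ∩ insert b (G.neighborFinset b) = {b} := by
    rw [inter_insert_of_mem hb, disjoint_iff_inter_eq_empty.mp
      (disjoint_compl_right.mono_right (hnbr b hb))]
    rfl
  rw [lmarginal_eq_lmarginal_inter (hmeas b hb) (hdep b hb), hBb, lmarginal_singleton]
  refine lintegral_congr fun t => prod_congr rfl fun a ha => ?_
  rw [update_self, update_of_ne (G.ne_of_adj ((mem_neighborFinset _ _ _).mp ha)).symm]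

theorem lintegral_prod_prod_neighborFinset_le {d : ℕ} (hreg : G.IsRegularOfDegree d) (hd : 0 < d)
    {B : Finset V} (hB : G.IsBipartiteWith ↑Bᶜ ↑B) (hF : Measurable (uncurry F)) :
    ∫⁻ x, ∏ b ∈ B, ∏ a ∈ G.neighborFinset b, F (x a) (x b) ∂Measure.pi (fun _ => μ) ≤
      (∫⁻ z : Fin d → α, (∫⁻ t, ∏ i, F (z i) t ∂μ) ^ d ∂Measure.pi fun _ => μ) ^
        ((#B : ℝ) / d) := by
  have : Nonempty α := nonempty_of_isProbabilityMeasure μ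
  let x₀ : V → α := fun _ => Classical.arbitrary α
  have hmeas (b : V) (_ : b ∈ B) :
      Measurable fun x : V → α => ∫⁻ t, ∏ a ∈ G.neighborFinset b, F (x a) t ∂μ := by
    fun_prop
  have hdep (b : V) (_ : b ∈ B) :
      DependsOn (fun x : V → α => ∫⁻ t, ∏ a ∈ G.neighborFinset b, F (x a) t ∂μ)
        ↑(G.neighborFinset b) := fun x y hxy =>
    lintegral_congr fun t => prod_congr rfl fun a ha => by rw [hxy a (mem_coe.mpr ha)]
  have hcount (i : V) (_ : i ∈ Bᶜ) : #{b ∈ B | i ∈ G.neighborFinset b} ≤ (d : ℝ) := by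
    rw [← hreg.degree_eq i, ← card_neighborFinset_eq_degree]
    exact_mod_cast card_le_card fun b hb => by
      simpa [G.adj_comm] using (mem_filter.mp hb).2
  rw [lintegral_prod_prod_neighborFinset_eq_lmarginal hB hF x₀]
  refine (lmarginal_prod_le_prod_lmarginal_rpow B (fun b => G.neighborFinset b)
    (Nat.cast_pos.mpr hd) Bᶜ hcount hmeas hdep x₀).trans_eq ?_
  have hfactor (b : V) (hb : b ∈ B) :
      (∫⋯∫⁻_Bᶜ, (fun x => (∫⁻ t, ∏ a ∈ G.neighborFinset b, F (x a) t ∂μ) ^ (d : ℝ))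
        ∂fun _ => μ) x₀ =
      ∫⁻ z : Fin d → α, (∫⁻ t, ∏ i, F (z i) t ∂μ) ^ d ∂Measure.pi fun _ => μ := by
    simp_rw [ENNReal.rpow_natCast]
    rw [lmarginal_eq_lmarginal_inter ((hmeas b hb).pow_const d)
      (fun x y hxy => congrArg (· ^ d) (hdep b hb hxy)),
      inter_eq_right.mpr (isBipartiteWith_neighborFinset_subset' hB hb)]
    exact lmarginal_pow_lintegral_prod_eq
      (hreg.degree_eq b ▸ card_neighborFinset_eq_degree G b) x₀
  rw [prod_congr rfl fun b hb => by rw [hfactor b hb], prod_const, ← ENNReal.rpow_natCast,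
    ← ENNReal.rpow_mul, inv_mul_eq_div]

end Density

end SimpleGraph

section LHomDensity

variable {V : Type*} [Fintype V] [LinearOrder V] {α : Type*} [MeasurableSpace α]

/-- `homDensity` in `ℝ≥0∞`, where no integrability side conditions arise. -/
noncomputable def lhomDensity (μ : Measure α) (H : SimpleGraph V) [DecidableRel H.Adj]
    (F : α → α → ℝ≥0∞) : ℝ≥0∞ :=
  ∫⁻ x : V → α, ∏ e ∈ univ.filter (fun e : V × V => e.1 < e.2 ∧ H.Adj e.1 e.2), F (x e.1) (x e.2)
    ∂Measure.pi fun _ => μ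

theorem homDensity_eq_toReal_lhomDensity {m : ℕ} (H : SimpleGraph (Fin m)) [DecidableRel H.Adj]
    {f : I → I → ℝ} (hf₀ : ∀ x y, 0 ≤ f x y) (hf : Measurable (uncurry f)) :
    homDensity H f = (lhomDensity volume H fun x y => ENNReal.ofReal (f x y)).toReal := by
  rw [homDensity, integral_eq_lintegral_of_nonneg_ae
    (.of_forall fun _ => prod_nonneg fun _ _ => hf₀ _ _)
    (Finset.measurable_prod _ fun _ _ => by fun_prop).aestronglyMeasurable, lhomDensity, volume_pi]
  congr 1
  exact lintegral_congr fun x => ENNReal.ofReal_prod_of_nonneg fun e _ => hf₀ _ _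

variable {μ : Measure α} {H : SimpleGraph V} [DecidableRel H.Adj] {F : α → α → ℝ≥0∞}

theorem lhomDensity_le_one [IsProbabilityMeasure μ] (hF : ∀ x y, F x y ≤ 1) :
    lhomDensity μ H F ≤ 1 :=
  (lintegral_mono fun x => prod_le_one' fun e _ => hF _ _).trans_eq (by simp)

theorem lhomDensity_eq_lintegral_prod_prod_neighborFinset {s : Set V} {B : Finset V}
    (hB : H.IsBipartiteWith s B) (hF : ∀ x y, F x y = F y x) :
    lhomDensity μ H F =
      ∫⁻ x, ∏ b ∈ B, ∏ a ∈ H.neighborFinset b, F (x a) (x b) ∂Measure.pi fun _ => μ :=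
  lintegral_congr fun x => H.prod_adj_lt_eq_prod_prod_neighborFinset hB (fun a b => F (x a) (x b))
    fun _ _ => hF _ _

end LHomDensity

section Kdd

variable {α : Type*} [MeasurableSpace α] {μ : Measure α} [IsProbabilityMeasure μ]
  {F : α → α → ℝ≥0∞}

theorem lhomDensity_Kdd (d : ℕ) (hF : Measurable (uncurry F)) (hsymm : ∀ x y, F x y = F y x) :
    lhomDensity μ (Kdd d) F =
      ∫⁻ z : Fin d → α, (∫⁻ t, ∏ i, F (z i) t ∂μ) ^ d ∂Measure.pi fun _ => μ := by
  set low : Finset (Fin (2 * d)) := {j | (j : ℕ) < d}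
  have hadj {a b : Fin (2 * d)} : (Kdd d).Adj a b ↔ (a ∈ low ↔ b ∉ low) := by
    simp only [Kdd, low, mem_filter, mem_univ, true_and, xor_iff_iff_not]
  have hB : (Kdd d).IsBipartiteWith ↑lowᶜ ↑low :=
    ⟨by simp [disjoint_compl_left], fun a b hab => by
      have := hadj.mp hab
      simp only [coe_compl, Set.mem_compl_iff, mem_coe]
      tauto⟩
  have hN (b : Fin (2 * d)) (hb : b ∈ low) : (Kdd d).neighborFinset b = lowᶜ := by
    ext a
    simp [hadj, hb]
  have hcard : #low = d := by
    simp only [low, Fin.card_filter_val_lt]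
    omega
  have hcard_compl : #lowᶜ = d := by
    rw [card_compl, hcard, Fintype.card_fin]
    omega
  have : Nonempty α := nonempty_of_isProbabilityMeasure μ
  let x₀ : Fin (2 * d) → α := fun _ => Classical.arbitrary α
  rw [lhomDensity_eq_lintegral_prod_prod_neighborFinset hB hsymm,
    SimpleGraph.lintegral_prod_prod_neighborFinset_eq_lmarginal hB hF x₀,
    ← lmarginal_pow_lintegral_prod_eq hcard_compl x₀]
  congr 1
  ext x
  rw [prod_congr rfl fun b hb => by rw [hN b hb], prod_const, hcard]

end Kdd

theorem lhomDensity_le_lhomDensity_Kdd_rpow {α V : Type*} [MeasurableSpace α] {μ : Measure α}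
    [IsProbabilityMeasure μ] {F : α → α → ℝ≥0∞} (hF : Measurable (uncurry F))
    (hsymm : ∀ x y, F x y = F y x) [Fintype V] [LinearOrder V] {G : SimpleGraph V}
    [DecidableRel G.Adj] {d : ℕ} (hreg : G.IsRegularOfDegree d) (hd : 0 < d) {B : Finset V}
    (hB : G.IsBipartiteWith ↑Bᶜ ↑B) :
    lhomDensity μ G F ≤ lhomDensity μ (Kdd d) F ^ ((#B : ℝ) / d) := by
  rw [lhomDensity_eq_lintegral_prod_prod_neighborFinset hB hsymm, lhomDensity_Kdd d hF hsymm]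
  exact G.lintegral_prod_prod_neighborFinset_le hreg hd hB hF

/-- For a `d`-regular bipartite graph `G` and a graphon `f`,
`t(G, f) ≤ t(K_{d,d}, f)^{|V(G)|/(2d)}`. -/
theorem homDensity_le_homDensity_Kdd
    {m : ℕ} (G : SimpleGraph (Fin m)) [DecidableRel G.Adj]
    (d : ℕ) (hd : 1 ≤ d)
    (hreg : G.IsRegularOfDegree d)
    (hbip : G.Colorable 2)
    (f : I → I → ℝ)
    (hrange : ∀ x y, f x y ∈ Set.Icc (0 : ℝ) 1)
    (hsymm : ∀ x y, f x y = f y x)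
    (hmeas : Measurable (fun z : I × I => f z.1 z.2)) :
    homDensity G f ≤ (homDensity (Kdd d) f) ^ ((m : ℝ) / (2 * d)) := by
  classical
  obtain ⟨s, t, hst⟩ := SimpleGraph.IsBipartite.exists_isBipartiteWith hbip
  have hB : G.IsBipartiteWith ↑t.toFinsetᶜ ↑t.toFinset := by simpa using hst.compl_left
  have hexp : (m : ℝ) / (2 * d) = #t.toFinset / d := by
    have hm : (m : ℝ) = 2 * #t.toFinset := by
      exact_mod_cast (Fintype.card_fin m).symm.trans (hreg.card_eq_two_mul_card hd hB)
    rw [hm, mul_div_mul_left _ _ two_ne_zero]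
  have hF : Measurable (uncurry fun x y => ENNReal.ofReal (f x y)) :=
    ENNReal.measurable_ofReal.comp hmeas
  have hF_symm (x y : I) : ENNReal.ofReal (f x y) = ENNReal.ofReal (f y x) := by rw [hsymm]
  have hF_le (x y : I) : ENNReal.ofReal (f x y) ≤ 1 := ENNReal.ofReal_le_one.mpr (hrange x y).2
  rw [homDensity_eq_toReal_lhomDensity _ (fun x y => (hrange x y).1) hmeas,
    homDensity_eq_toReal_lhomDensity _ (fun x y => (hrange x y).1) hmeas, hexp,
    ENNReal.toReal_rpow]
  exact ENNReal.toReal_mono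
    (ENNReal.rpow_ne_top_of_nonneg (by positivity)
      ((lhomDensity_le_one hF_le).trans_lt ENNReal.one_lt_top).ne)
    (lhomDensity_le_lhomDensity_Kdd_rpow hF hF_symm hreg hd hB)
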